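/- Let G be a finite group acting on a finite set X, U = Z[X], and A = ker(U → Z) the augmentation kernel. Then the G-equivariant map ρ: Sym²U → U defined by ρ(xx') = x + x' for x, x' ∈ X has kernel exactly Sym²A (viewed as a sublattice of Sym²U) and image ε⁻¹(2Z), yielding an exact sequence of G-modules 0 → Sym²A → Z[P₂(X)] → A/2A → 0. -/

import Mathlib

open Function

section Core
variable (G : Type) [Group G]

/-- A map is `G`-equivariant. -/
def IsEquivMapP {M N : Type} [AddCommGroup M] [AddCommGroup N]
    [DistribMulAction G M] [DistribMulAction G N] (f : M → N) : Prop :=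
  ∀ (g : G) (m : M), f (g • m) = g • f m

/-- `M` is a permutation `G`-lattice: it has a finite `ℤ`-basis permuted by `G`. -/
def IsPermLat (M : Type) [AddCommGroup M] [DistribMulAction G M] : Prop :=
  ∃ (ι : Type) (_ : Fintype ι) (b : Module.Basis ι ℤ M) (σ : G → ι → ι),
    ∀ (g : G) (i : ι), g • (b i : M) = b (σ g i)

/-- `M` is a lattice: finitely generated and free over `ℤ`. -/
def IsLat (M : Type) [AddCommGroup M] : Prop := Module.Free ℤ M ∧ Module.Finite ℤ M

/-- A short exact sequence `0 → M → E → P → 0` of `G`-modules. -/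
def ShortExactG (M E P : Type) [AddCommGroup M] [AddCommGroup E] [AddCommGroup P]
    [DistribMulAction G M] [DistribMulAction G E] [DistribMulAction G P] : Prop :=
  ∃ (i : M →+ E) (p : E →+ P), IsEquivMapP G i ∧ IsEquivMapP G p ∧
    Injective i ∧ Surjective p ∧ i.range = p.ker

/-- Colliot-Thélène–Sansuc equivalence of `G`-lattices. -/
def LatEquiv (M N : Type) [AddCommGroup M] [AddCommGroup N]
    [DistribMulAction G M] [DistribMulAction G N] : Prop :=
  ∃ (E : Type) (_ : AddCommGroup E) (_ : DistribMulAction G E)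
    (P : Type) (_ : AddCommGroup P) (_ : DistribMulAction G P)
    (Q : Type) (_ : AddCommGroup Q) (_ : DistribMulAction G Q),
    IsLat E ∧ IsPermLat G P ∧ IsPermLat G Q ∧
    ShortExactG G M E P ∧ ShortExactG G N E Q

/-- `M` is stably permutation. -/
def IsStablyPerm (M : Type) [AddCommGroup M] [DistribMulAction G M] : Prop :=
  ∃ (P : Type) (_ : AddCommGroup P) (_ : DistribMulAction G P)
    (Q : Type) (_ : AddCommGroup Q) (_ : DistribMulAction G Q),
    IsPermLat G P ∧ IsPermLat G Q ∧
    ∃ e : (M × P) ≃+ Q, IsEquivMapP G e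

/-- `M` is permutation projective: a direct summand of a permutation lattice. -/
def IsPermProj (M : Type) [AddCommGroup M] [DistribMulAction G M] : Prop :=
  ∃ (P : Type) (_ : AddCommGroup P) (_ : DistribMulAction G P), IsPermLat G P ∧
    ∃ (i : M →+ P) (r : P →+ M), IsEquivMapP G i ∧ IsEquivMapP G r ∧ ∀ m, r (i m) = m

/-- `M` is quasi-permutation: it embeds into a permutation lattice with permutation quotient. -/
def IsQuasiPerm (M : Type) [AddCommGroup M] [DistribMulAction G M] : Prop :=
  ∃ (P : Type) (_ : AddCommGroup P) (_ : DistribMulAction G P)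
    (Q : Type) (_ : AddCommGroup Q) (_ : DistribMulAction G Q),
    IsPermLat G P ∧ IsPermLat G Q ∧ ShortExactG G M P Q

variable (M : Type) [AddCommGroup M] [DistribMulAction G M]

/-- 1-cocycles. -/
def Z1 : AddSubgroup (G → M) where
  carrier := {f | ∀ g h : G, f (g * h) = g • f h + f g}
  zero_mem' := by intro g h; simp
  add_mem' := by
    intro f f' hf hf' g h
    simp only [Pi.add_apply, hf g h, hf' g h, smul_add]; abel
  neg_mem' := by
    intro f hf g h
    simp only [Pi.neg_apply, hf g h, smul_neg]; abel

/-- The coboundary homomorphism. -/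
def coboundHom : M →+ Z1 G M where
  toFun m := ⟨fun g => g • m - m, by intro g h; simp only [mul_smul, smul_sub]; abel⟩
  map_zero' := by apply Subtype.ext; funext g; simp
  map_add' := by
    intro a b; apply Subtype.ext; funext g
    show g • (a + b) - (a + b) = (g • a - a) + (g • b - b)
    simp only [smul_add]; abel

/-- 1-coboundaries. -/
def B1 : AddSubgroup (Z1 G M) := (coboundHom G M).range

/-- First group cohomology `H¹(G, M)`. -/
abbrev H1 := Z1 G M ⧸ B1 G M

/-- Restriction of cocycles to a subgroup. -/
def resZ1 (H : Subgroup G) : Z1 G M →+ Z1 H M where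
  toFun f := ⟨fun h => f.1 h, by
    intro a b
    have := f.2 (a : G) (b : G)
    exact this⟩
  map_zero' := rfl
  map_add' := fun _ _ => rfl

/-- Restriction on `H¹`. -/
def resH1 (H : Subgroup G) : H1 G M →+ H1 H M :=
  QuotientAddGroup.map _ _ (resZ1 G M H) (by
    rintro _ ⟨m, rfl⟩
    exact ⟨m, Subtype.ext rfl⟩)

/-- `Ш¹(G, M)`. -/
def Sha1 : AddSubgroup (H1 G M) :=
  ⨅ g : G, (resH1 G M (Subgroup.zpowers g)).ker

/-- `M` is coflasque: `H¹(H, M) = 0` for all subgroups `H ≤ G`. -/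
def IsCoflasque : Prop := ∀ H : Subgroup G, ∀ x y : H1 H M, x = y

end Core

section Core2
variable (G : Type) [Group G] (M : Type) [AddCommGroup M] [DistribMulAction G M]

/-- 2-cocycles. -/
def Z2 : AddSubgroup (G → G → M) where
  carrier := {f | ∀ g h k : G, g • f h k - f (g * h) k + f g (h * k) - f g h = 0}
  zero_mem' := by intro g h k; simp
  add_mem' := by
    intro f f' hf hf' g h k
    have h1 := hf g h k; have h2 := hf' g h k
    simp only [Pi.add_apply, smul_add]
    calc g • f h k + g • f' h k - (f (g * h) k + f' (g * h) k) +
          (f g (h * k) + f' g (h * k)) - (f g h + f' g h)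
        = (g • f h k - f (g * h) k + f g (h * k) - f g h) +
          (g • f' h k - f' (g * h) k + f' g (h * k) - f' g h) := by abel
      _ = 0 := by rw [h1, h2, add_zero]
  neg_mem' := by
    intro f hf g h k
    have h1 := hf g h k
    simp only [Pi.neg_apply, smul_neg]
    calc -(g • f h k) - -f (g * h) k + -f g (h * k) - -f g h
        = -(g • f h k - f (g * h) k + f g (h * k) - f g h) := by abel
      _ = 0 := by rw [h1, neg_zero]

/-- The 2-coboundary homomorphism. -/
def cobound2Hom : (G → M) →+ Z2 G M where
  toFun u := ⟨fun g h => g • u h - u (g * h) + u g, by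
    intro g h k
    simp only [mul_smul, smul_sub, smul_add, mul_assoc]
    abel⟩
  map_zero' := by apply Subtype.ext; funext g h; simp
  map_add' := by
    intro a b; apply Subtype.ext; funext g h
    show g • (a h + b h) - (a (g * h) + b (g * h)) + (a g + b g)
        = (g • a h - a (g * h) + a g) + (g • b h - b (g * h) + b g)
    simp only [smul_add]; abel

/-- 2-coboundaries. -/
def B2 : AddSubgroup (Z2 G M) := (cobound2Hom G M).range

/-- Second group cohomology `H²(G, M)`. -/
abbrev H2 := Z2 G M ⧸ B2 G M

/-- Restriction of 2-cocycles to a subgroup. -/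
def resZ2 (H : Subgroup G) : Z2 G M →+ Z2 H M where
  toFun f := ⟨fun a b => f.1 a b, by
    intro a b c
    have := f.2 (a : G) (b : G) (c : G)
    exact this⟩
  map_zero' := rfl
  map_add' := fun _ _ => rfl

/-- Restriction on `H²`. -/
def resH2 (H : Subgroup G) : H2 G M →+ H2 H M :=
  QuotientAddGroup.map _ _ (resZ2 G M H) (by
    rintro _ ⟨u, rfl⟩
    exact ⟨fun h : H => u (h : G), Subtype.ext rfl⟩)

/-- `Ш²(G, M)`. -/
def Sha2 : AddSubgroup (H2 G M) :=
  ⨅ g : G, (resH2 G M (Subgroup.zpowers g)).ker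

/-- The subgroup `2M`. -/
def twoSub : AddSubgroup M :=
  (AddMonoidHom.mk' (fun m : M => (2 : ℤ) • m) (by
    intro a b
    show (2 : ℤ) • (a + b) = (2 : ℤ) • a + (2 : ℤ) • b
    rw [smul_add])).range

/-- `M/2M`. -/
abbrev ModTwo := M ⧸ twoSub M

noncomputable instance : SMul G (ModTwo M) :=
  ⟨fun g => QuotientAddGroup.map _ _ (DistribMulAction.toAddMonoidHom M g) (by
    rintro _ ⟨m, rfl⟩
    refine ⟨g • m, ?_⟩
    show (2 : ℤ) • (g • m) = g • ((2 : ℤ) • m)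
    rw [smul_comm])⟩

theorem modTwo_smul_mk (g : G) (m : M) :
    g • (QuotientAddGroup.mk m : ModTwo M) = QuotientAddGroup.mk (g • m) := rfl

noncomputable instance : DistribMulAction G (ModTwo M) where
  one_smul x := by
    obtain ⟨m, rfl⟩ := QuotientAddGroup.mk_surjective x
    rw [modTwo_smul_mk, one_smul]
  mul_smul g h x := by
    obtain ⟨m, rfl⟩ := QuotientAddGroup.mk_surjective x
    rw [modTwo_smul_mk, modTwo_smul_mk, modTwo_smul_mk, mul_smul]
  smul_zero g := map_zero (QuotientAddGroup.map _ _ (DistribMulAction.toAddMonoidHom M g) _)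
  smul_add g x y := map_add (QuotientAddGroup.map _ _ (DistribMulAction.toAddMonoidHom M g) _) x y

variable [Finite G]

/-- Kernel of the norm map (for a finite group). -/
def normKer : AddSubgroup M where
  carrier := {x | ∑ᶠ g : G, g • x = 0}
  zero_mem' := by simp
  add_mem' := by
    intro x y hx hy
    have hx' : ∑ᶠ g : G, g • x = 0 := hx
    have hy' : ∑ᶠ g : G, g • y = 0 := hy
    show ∑ᶠ g : G, g • (x + y) = 0
    simp only [smul_add]
    rw [finsum_add_distrib (Set.toFinite _) (Set.toFinite _), hx', hy', add_zero]
  neg_mem' := by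
    intro x hx
    have hx' : ∑ᶠ g : G, g • x = 0 := hx
    show ∑ᶠ g : G, g • (-x) = 0
    simp only [smul_neg]
    rw [finsum_neg_distrib, hx', neg_zero]

/-- The subgroup generated by elements `g • m - m`. -/
def augSub : AddSubgroup M := AddSubgroup.closure {x | ∃ (g : G) (m : M), x = g • m - m}

/-- Tate cohomology `Ĥ⁻¹(G, M)` (for a finite group `G`). -/
abbrev TateNeg1 := normKer G M ⧸ ((augSub G M).addSubgroupOf (normKer G M))

/-- `M` is flasque: `Ĥ⁻¹(H, M) = 0` for all subgroups `H ≤ G`. -/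
def IsFlasque : Prop := ∀ H : Subgroup G, ∀ x y : TateNeg1 H M, x = y

end Core2

section Core3
variable (G : Type) [Group G]

/-- `M` is equivalent to a direct summand of a quasi-permutation `G`-lattice. -/
def IsEquivSummandQP (M : Type) [AddCommGroup M] [DistribMulAction G M] : Prop :=
  ∃ (S : Type) (_ : AddCommGroup S) (_ : DistribMulAction G S)
    (D : Type) (_ : AddCommGroup D) (_ : DistribMulAction G D)
    (D' : Type) (_ : AddCommGroup D') (_ : DistribMulAction G D'),
    IsLat S ∧ IsQuasiPerm G S ∧ (∃ e : (D × D') ≃+ S, IsEquivMapP G e) ∧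
    LatEquiv G M D

end Core3

section Tensor
open TensorProduct
variable (G : Type) [Group G] (M : Type) [AddCommGroup M] [DistribMulAction G M]

/-- The action of `g : G` as a `ℤ`-linear map. -/
def gLin (g : G) : M →ₗ[ℤ] M := (DistribMulAction.toAddMonoidHom M g).toIntLinearMap

noncomputable instance tensorSMul : SMul G (M ⊗[ℤ] M) :=
  ⟨fun g => TensorProduct.map (gLin G M g) (gLin G M g)⟩

theorem tsmul_def (g : G) (x : M ⊗[ℤ] M) :
    g • x = TensorProduct.map (gLin G M g) (gLin G M g) x := rfl

theorem gLin_one : gLin G M 1 = LinearMap.id := by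
  ext m; show (1 : G) • m = m; rw [one_smul]

theorem gLin_mul (g h : G) : gLin G M (g * h) = (gLin G M g).comp (gLin G M h) := by
  ext m; show (g * h) • m = g • h • m; rw [mul_smul]

noncomputable instance tensorAct : DistribMulAction G (M ⊗[ℤ] M) where
  one_smul x := by rw [tsmul_def, gLin_one, TensorProduct.map_id]; rfl
  mul_smul g h x := by
    rw [tsmul_def, tsmul_def, tsmul_def, gLin_mul, TensorProduct.map_comp]; rfl
  smul_zero g := map_zero _
  smul_add g x y := map_add _ x y

/-- Generators of the symmetric relation. -/
def symSpan : Submodule ℤ (M ⊗[ℤ] M) :=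
  Submodule.span ℤ {x | ∃ a b : M, x = a ⊗ₜ[ℤ] b - b ⊗ₜ[ℤ] a}

/-- Generators of the wedge relation. -/
def wedSpan : Submodule ℤ (M ⊗[ℤ] M) :=
  Submodule.span ℤ {x | ∃ a : M, x = a ⊗ₜ[ℤ] a}

/-- The second symmetric power `Sym²M`. -/
abbrev Sym2Q := (M ⊗[ℤ] M) ⧸ symSpan M

/-- The second exterior power `∧²M`. -/
abbrev Wedge2Q := (M ⊗[ℤ] M) ⧸ wedSpan M

theorem symSpan_le_comap (g : G) :
    symSpan M ≤ (symSpan M).comap (TensorProduct.map (gLin G M g) (gLin G M g)) := by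
  refine Submodule.span_le.2 ?_
  rintro _ ⟨a, b, rfl⟩
  show TensorProduct.map (gLin G M g) (gLin G M g) (a ⊗ₜ[ℤ] b - b ⊗ₜ[ℤ] a) ∈ symSpan M
  rw [map_sub, TensorProduct.map_tmul, TensorProduct.map_tmul]
  exact Submodule.subset_span ⟨gLin G M g a, gLin G M g b, rfl⟩

theorem wedSpan_le_comap (g : G) :
    wedSpan M ≤ (wedSpan M).comap (TensorProduct.map (gLin G M g) (gLin G M g)) := by
  refine Submodule.span_le.2 ?_
  rintro _ ⟨a, rfl⟩
  show TensorProduct.map (gLin G M g) (gLin G M g) (a ⊗ₜ[ℤ] a) ∈ wedSpan M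
  rw [TensorProduct.map_tmul]
  exact Submodule.subset_span ⟨gLin G M g a, rfl⟩

noncomputable instance sym2SMul : SMul G (Sym2Q M) :=
  ⟨fun g => Submodule.mapQ _ _ (TensorProduct.map (gLin G M g) (gLin G M g))
    (symSpan_le_comap G M g)⟩

noncomputable instance wedge2SMul : SMul G (Wedge2Q M) :=
  ⟨fun g => Submodule.mapQ _ _ (TensorProduct.map (gLin G M g) (gLin G M g))
    (wedSpan_le_comap G M g)⟩

theorem sym2_smul_mk (g : G) (x : M ⊗[ℤ] M) :
    g • ((symSpan M).mkQ x) = (symSpan M).mkQ (g • x) :=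
  Submodule.mapQ_apply _ _ _ _

theorem wedge2_smul_mk (g : G) (x : M ⊗[ℤ] M) :
    g • ((wedSpan M).mkQ x) = (wedSpan M).mkQ (g • x) :=
  Submodule.mapQ_apply _ _ _ _

noncomputable instance sym2Act : DistribMulAction G (Sym2Q M) where
  one_smul x := by
    obtain ⟨y, rfl⟩ := (symSpan M).mkQ_surjective x
    rw [sym2_smul_mk, one_smul]
  mul_smul g h x := by
    obtain ⟨y, rfl⟩ := (symSpan M).mkQ_surjective x
    rw [sym2_smul_mk, sym2_smul_mk, sym2_smul_mk, mul_smul]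
  smul_zero g := by
    have h := sym2_smul_mk G M g 0
    rwa [smul_zero, map_zero] at h
  smul_add g x y := by
    obtain ⟨a, rfl⟩ := (symSpan M).mkQ_surjective x
    obtain ⟨b, rfl⟩ := (symSpan M).mkQ_surjective y
    rw [← map_add (symSpan M).mkQ a b, sym2_smul_mk, sym2_smul_mk, sym2_smul_mk, smul_add, map_add]

noncomputable instance wedge2Act : DistribMulAction G (Wedge2Q M) where
  one_smul x := by
    obtain ⟨y, rfl⟩ := (wedSpan M).mkQ_surjective x
    rw [wedge2_smul_mk, one_smul]
  mul_smul g h x := by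
    obtain ⟨y, rfl⟩ := (wedSpan M).mkQ_surjective x
    rw [wedge2_smul_mk, wedge2_smul_mk, wedge2_smul_mk, mul_smul]
  smul_zero g := by
    have h := wedge2_smul_mk G M g 0
    rwa [smul_zero, map_zero] at h
  smul_add g x y := by
    obtain ⟨a, rfl⟩ := (wedSpan M).mkQ_surjective x
    obtain ⟨b, rfl⟩ := (wedSpan M).mkQ_surjective y
    rw [← map_add (wedSpan M).mkQ a b, wedge2_smul_mk, wedge2_smul_mk, wedge2_smul_mk, smul_add, map_add]

variable {M} {N : Type} [AddCommGroup N]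

/-- The map `Sym²f` induced by a linear map `f`. -/
noncomputable def sym2Map (f : M →ₗ[ℤ] N) : Sym2Q M →ₗ[ℤ] Sym2Q N :=
  Submodule.mapQ _ _ (TensorProduct.map f f) (by
    refine Submodule.span_le.2 ?_
    rintro _ ⟨a, b, rfl⟩
    show TensorProduct.map f f (a ⊗ₜ[ℤ] b - b ⊗ₜ[ℤ] a) ∈ symSpan N
    rw [map_sub, TensorProduct.map_tmul, TensorProduct.map_tmul]
    exact Submodule.subset_span ⟨f a, f b, rfl⟩)

/-- The map `∧²f` induced by a linear map `f`. -/
noncomputable def wedge2Map (f : M →ₗ[ℤ] N) : Wedge2Q M →ₗ[ℤ] Wedge2Q N :=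
  Submodule.mapQ _ _ (TensorProduct.map f f) (by
    refine Submodule.span_le.2 ?_
    rintro _ ⟨a, rfl⟩
    show TensorProduct.map f f (a ⊗ₜ[ℤ] a) ∈ wedSpan N
    rw [TensorProduct.map_tmul]
    exact Submodule.subset_span ⟨f a, rfl⟩)

end Tensor

section PermMod
variable (G : Type) [Group G] (X : Type) [MulAction G X]

/-- The permutation action on `ℤ[X] = X → ℤ`. -/
instance permSMul : SMul G (X → ℤ) := ⟨fun g f x => f (g⁻¹ • x)⟩

theorem perm_smul_def (g : G) (f : X → ℤ) (x : X) : (g • f) x = f (g⁻¹ • x) := rfl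

instance permAct : DistribMulAction G (X → ℤ) where
  one_smul f := funext fun x => by rw [perm_smul_def, inv_one, one_smul]
  mul_smul g h f := funext fun x => by
    rw [perm_smul_def, perm_smul_def, perm_smul_def, mul_inv_rev, mul_smul]
  smul_zero g := rfl
  smul_add g f f' := rfl

variable [Fintype X]

/-- The augmentation kernel `A = ker(ℤ[X] → ℤ)`. -/
def augKer : AddSubgroup (X → ℤ) where
  carrier := {f | ∑ x, f x = 0}
  zero_mem' := by simp
  add_mem' := by
    intro a b ha hb
    have ha' : ∑ x, a x = 0 := ha
    have hb' : ∑ x, b x = 0 := hb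
    show ∑ x, (a x + b x) = 0
    rw [Finset.sum_add_distrib, ha', hb', add_zero]
  neg_mem' := by
    intro a ha
    have ha' : ∑ x, a x = 0 := ha
    show ∑ x, (-(a x)) = 0
    rw [Finset.sum_neg_distrib, ha', neg_zero]

theorem smul_mem_augKer (g : G) (f : X → ℤ) (hf : f ∈ augKer X) :
    g • f ∈ augKer X := by
  have hf' : ∑ x, f x = 0 := hf
  show ∑ x, f (g⁻¹ • x) = 0
  exact (Equiv.sum_comp (MulAction.toPerm (g⁻¹ : G)) f).trans hf'

instance augKerSMul : SMul G (augKer X) :=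
  ⟨fun g f => ⟨g • (f : X → ℤ), smul_mem_augKer G X g f f.2⟩⟩

theorem augKer_smul_def (g : G) (f : augKer X) :
    ((g • f : augKer X) : X → ℤ) = g • (f : X → ℤ) := rfl

instance augKerAct : DistribMulAction G (augKer X) where
  one_smul f := Subtype.ext (by rw [augKer_smul_def, one_smul])
  mul_smul g h f := Subtype.ext (by
    rw [augKer_smul_def, augKer_smul_def, augKer_smul_def, mul_smul])
  smul_zero g := Subtype.ext (by
    rw [augKer_smul_def]
    show g • (0 : X → ℤ) = 0
    rw [smul_zero])
  smul_add g f f' := Subtype.ext (by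
    show g • ((f : X → ℤ) + f') = g • (f : X → ℤ) + g • (f' : X → ℤ)
    rw [smul_add])

end PermMod

section P2sec
variable (G : Type) [Group G]

/-- The set of 2-element subsets of `X`. -/
def P2 (X : Type) [DecidableEq X] : Type := {s : Finset X // s.card = 2}

noncomputable instance (X : Type) [DecidableEq X] [Fintype X] : Fintype (P2 X) := by
  unfold P2; infer_instance

instance p2SMul (X : Type) [DecidableEq X] [MulAction G X] : SMul G (P2 X) :=
  ⟨fun g s => ⟨s.1.image (fun x => g • x), by
    rw [Finset.card_image_of_injective _ (MulAction.injective g)]; exact s.2⟩⟩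

theorem p2_smul_def (X : Type) [DecidableEq X] [MulAction G X] (g : G) (s : P2 X) :
    (g • s).1 = s.1.image (fun x => g • x) := rfl

instance p2Act (X : Type) [DecidableEq X] [MulAction G X] : MulAction G (P2 X) where
  one_smul s := Subtype.ext (by
    rw [p2_smul_def]
    simp)
  mul_smul g h s := Subtype.ext (by
    simp only [p2_smul_def, Finset.image_image]
    refine Finset.image_congr ?_
    intro x _
    exact mul_smul g h x)

end P2sec

/-- The root lattice `A_{n-1}` as an `S_n`-lattice. -/
abbrev rootLat (n : ℕ) := augKer (Fin n)


/-- The augmentation homomorphism `ℤ[X] → ℤ`. -/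
def epsHom (X : Type) [Fintype X] : (X → ℤ) →+ ℤ :=
  AddMonoidHom.mk' (fun u => ∑ x, u x) (by
    intro a b
    show ∑ x, (a x + b x) = (∑ x, a x) + ∑ x, b x
    rw [Finset.sum_add_distrib])


/-!
Write `eₓ` for the basis of `U = ℤ[X]`; then `ρ (u v) = ε(v) u + ε(u) v`. For `x₀ ∈ X` the splitting
`U = A ⊕ ℤ e_{x₀}` gives `Sym²U = Sym²A ⊕ A e_{x₀} ⊕ ℤ e_{x₀}²`, on whose summands `ρ` is `0`,
`a ↦ a` and `n ↦ 2n e_{x₀}`; this yields the kernel and the image of `ρ`.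

In the coordinates `z = Σ dₓ eₓ² + Σ_{x,y} f_{xy} eₓ e_y` of `Sym²U`, `W = ℤ[P₂(X)]` is the
off-diagonal part and `ρ z = 2d + N f`, where `N {x, y} = eₓ + e_y`. On `Sym²A = ker ρ` the
diagonal part is therefore determined by the off-diagonal one, so `Sym²A → W` is injective, with
image the `f` such that `N f ∈ 2U`. As `N f ≡ Σ f_{xy} (eₓ - e_y) mod 2U` and `A ∩ 2U = 2A`, this
is the kernel of `W → A/2A`, `{x, y} ↦ eₓ - e_y`, which is onto because `A` lies in the image
of `ρ`.
-/

open TensorProduct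

noncomputable def Sym2Q.mk₂ (M : Type) [AddCommGroup M] : M →ₗ[ℤ] M →ₗ[ℤ] Sym2Q M :=
  (TensorProduct.mk ℤ M M).compr₂ (symSpan M).mkQ

local notation:70 a " ⊙ " b => Sym2Q.mk₂ _ a b

local notation "incl₂" => sym2Map (AddMonoidHom.toIntLinearMap (AddSubgroup.subtype (augKer _)))

namespace Sym2Q

variable {M N : Type} [AddCommGroup M] [AddCommGroup N]

theorem mk_comm (a b : M) : (a ⊙ b) = (b ⊙ a) :=
  (Submodule.Quotient.eq _).2 (Submodule.subset_span ⟨a, b, rfl⟩)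

theorem addHom_ext {φ ψ : Sym2Q M →+ N} (h : ∀ a b : M, φ (a ⊙ b) = ψ (a ⊙ b)) : φ = ψ := by
  ext z
  obtain ⟨w, rfl⟩ := Submodule.Quotient.mk_surjective (symSpan M) z
  induction w using TensorProduct.induction_on with
  | zero => simp only [Submodule.Quotient.mk_zero, map_zero]
  | tmul a b => exact h a b
  | add v w hv hw => simp only [Submodule.Quotient.mk_add, map_add, hv, hw]

noncomputable def lift (B : M →ₗ[ℤ] M →ₗ[ℤ] N) (hB : ∀ a b, B a b = B b a) :
    Sym2Q M →ₗ[ℤ] N :=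
  (symSpan M).liftQ (TensorProduct.lift B) <| Submodule.span_le.2 <| by
    rintro _ ⟨a, b, rfl⟩
    show TensorProduct.lift B (a ⊗ₜ[ℤ] b - b ⊗ₜ[ℤ] a) = 0
    rw [map_sub, lift.tmul, lift.tmul, hB, sub_self]

theorem linearMap_ext {φ ψ : Sym2Q M →ₗ[ℤ] N} (h : ∀ a b : M, φ (a ⊙ b) = ψ (a ⊙ b)) :
    φ = ψ :=
  LinearMap.toAddMonoidHom_injective (addHom_ext h)

theorem sym2Map_mk (f : M →ₗ[ℤ] N) (a b : M) : sym2Map f (a ⊙ b) = (f a ⊙ f b) := rfl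

theorem sym2Map_injective {f : M →ₗ[ℤ] N} {r : N →ₗ[ℤ] M} (hrf : LeftInverse r f) :
    Injective (sym2Map f) := by
  refine LeftInverse.injective (g := sym2Map r) fun z => ?_
  have : ((sym2Map r).comp (sym2Map f)).toAddMonoidHom = AddMonoidHom.id _ :=
    addHom_ext fun a b => by simp [sym2Map_mk, hrf a, hrf b]
  exact DFunLike.congr_fun this z

variable {G : Type} [Group G] [DistribMulAction G M] [DistribMulAction G N]

theorem smul_mk (g : G) (a b : M) : g • (a ⊙ b) = ((g • a) ⊙ (g • b)) := rfl

theorem isEquivMapP_of_mk {φ : Sym2Q M →+ N}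
    (h : ∀ (g : G) (a b : M), φ ((g • a) ⊙ (g • b)) = g • φ (a ⊙ b)) : IsEquivMapP G φ := by
  intro g z
  have : φ.comp (DistribSMul.toAddMonoidHom _ g) = (DistribSMul.toAddMonoidHom _ g).comp φ :=
    addHom_ext fun a b => h g a b
  exact DFunLike.congr_fun this z

theorem sym2Map_isEquivMapP {f : M →ₗ[ℤ] N} (hf : IsEquivMapP G f) :
    IsEquivMapP G (sym2Map f) :=
  isEquivMapP_of_mk (φ := (sym2Map f).toAddMonoidHom) fun g a b => by
    rw [LinearMap.toAddMonoidHom_coe, sym2Map_mk, sym2Map_mk, hf, hf, smul_mk]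

variable {X : Type} [Fintype X] [DecidableEq X]

theorem linearMap_ext_single {φ ψ : Sym2Q (X → ℤ) →ₗ[ℤ] N}
    (h : ∀ x y : X, φ (Pi.single x 1 ⊙ Pi.single y 1) = ψ (Pi.single x 1 ⊙ Pi.single y 1)) :
    φ = ψ := by
  ext x y
  exact h x y

theorem addHom_ext_single {φ ψ : Sym2Q (X → ℤ) →+ N}
    (h : ∀ x y : X, φ (Pi.single x 1 ⊙ Pi.single y 1) = ψ (Pi.single x 1 ⊙ Pi.single y 1)) :
    φ = ψ :=
  AddMonoidHom.toIntLinearMap_injective (linearMap_ext_single h)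

end Sym2Q

section Augmentation

variable {X : Type}

theorem epsHom_single [Fintype X] [DecidableEq X] (x : X) : epsHom X (Pi.single x 1) = 1 := by
  change ∑ y, Pi.single x (1 : ℤ) y = 1
  simp

theorem epsHom_smul [Fintype X] {G : Type} [Group G] [MulAction G X] (g : G) (u : X → ℤ) :
    epsHom X (g • u) = epsHom X u :=
  Equiv.sum_comp (MulAction.toPerm g⁻¹) u

theorem smul_single [DecidableEq X] {G : Type} [Group G] [MulAction G X] (g : G) (x : X) :
    g • (Pi.single x 1 : X → ℤ) = Pi.single (g • x) 1 := by
  ext y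
  simp [perm_smul_def, Pi.single_apply, inv_smul_eq_iff]

theorem mem_twoSub_iff {M : Type} [AddCommGroup M] (m : M) :
    m ∈ twoSub M ↔ ∃ c : M, (2 : ℤ) • c = m := Iff.rfl

theorem mem_augKer_iff [Fintype X] (u : X → ℤ) : u ∈ augKer X ↔ epsHom X u = 0 := Iff.rfl

theorem coe_mem_twoSub_iff [Fintype X] (a : augKer X) :
    (a : X → ℤ) ∈ twoSub (X → ℤ) ↔ a ∈ twoSub (augKer X) := by
  refine ⟨fun ⟨c, hc⟩ => ⟨⟨c, ?_⟩, Subtype.ext hc⟩, fun ⟨c, hc⟩ => ⟨c, congrArg Subtype.val hc⟩⟩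
  have hε := congrArg (epsHom X) (show (2 : ℤ) • c = a from hc)
  rw [map_zsmul, (mem_augKer_iff _).1 a.2, smul_eq_mul] at hε
  rw [mem_augKer_iff]
  omega

end Augmentation

open Sym2Q

noncomputable def symRho (X : Type) [Fintype X] : Sym2Q (X → ℤ) →ₗ[ℤ] (X → ℤ) :=
  Sym2Q.lift
    (LinearMap.mk₂ ℤ (fun u v => epsHom X v • u + epsHom X u • v)
      (fun u u' v => by simp only [map_add, smul_add, add_smul]; abel)
      (fun c u v => by rw [map_zsmul, smul_eq_mul]; module)
      (fun u v v' => by simp only [map_add, smul_add, add_smul]; abel)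
      (fun c u v => by rw [map_zsmul, smul_eq_mul]; module))
    (fun _ _ => add_comm _ _)

section SymRho

variable {X : Type} [Fintype X]

theorem symRho_mk (u v : X → ℤ) : symRho X (u ⊙ v) = epsHom X v • u + epsHom X u • v := rfl

theorem symRho_single_single [DecidableEq X] (x y : X) :
    symRho X (Pi.single x 1 ⊙ Pi.single y 1) = Pi.single x 1 + Pi.single y 1 := by
  rw [symRho_mk, epsHom_single, epsHom_single, one_smul, one_smul]

theorem eq_symRho [DecidableEq X] {ρ : Sym2Q (X → ℤ) →+ (X → ℤ)}
    (hρ : ∀ x y : X, ρ (Pi.single x 1 ⊙ Pi.single y 1) = Pi.single x 1 + Pi.single y 1) :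
    ρ = (symRho X).toAddMonoidHom :=
  addHom_ext_single fun x y => by
    rw [hρ, LinearMap.toAddMonoidHom_coe, symRho_single_single]

theorem symRho_isEquivMapP {G : Type} [Group G] [MulAction G X] : IsEquivMapP G (symRho X) :=
  isEquivMapP_of_mk (φ := (symRho X).toAddMonoidHom) fun g u v => by
    simp only [LinearMap.toAddMonoidHom_coe, symRho_mk, epsHom_smul, smul_add, smul_comm g]

theorem symRho_sym2Map_augKer (t : Sym2Q (augKer X)) : symRho X (incl₂ t) = 0 := by
  have : symRho X ∘ₗ incl₂ = 0 :=
    linearMap_ext fun a b => by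
      simp [sym2Map_mk, symRho_mk, (mem_augKer_iff _).1 a.2, (mem_augKer_iff _).1 b.2]
  exact LinearMap.congr_fun this t

end SymRho

section Kernel

variable {X : Type} [Fintype X]

noncomputable def augProj [DecidableEq X] (x₀ : X) : (X → ℤ) →ₗ[ℤ] augKer X :=
  LinearMap.codRestrict (augKer X).toIntSubmodule
    (LinearMap.id - (LinearMap.toSpanSingleton ℤ _ (Pi.single x₀ 1)) ∘ₗ (epsHom X).toIntLinearMap)
    fun u => show epsHom X (u - epsHom X u • Pi.single x₀ 1) = 0 by
      rw [map_sub, map_zsmul, epsHom_single, smul_eq_mul, mul_one, sub_self]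

theorem coe_augProj [DecidableEq X] (x₀ : X) (u : X → ℤ) :
    (augProj x₀ u : X → ℤ) = u - epsHom X u • Pi.single x₀ 1 := rfl

theorem augProj_coe [DecidableEq X] (x₀ : X) (a : augKer X) : augProj x₀ a = a :=
  Subtype.ext <| by rw [coe_augProj, (mem_augKer_iff _).1 a.2, zero_smul, sub_zero]

noncomputable def epsSq (X : Type) [Fintype X] : Sym2Q (X → ℤ) →ₗ[ℤ] ℤ :=
  Sym2Q.lift ((LinearMap.mul ℤ ℤ).compl₁₂ (epsHom X).toIntLinearMap (epsHom X).toIntLinearMap)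
    (fun _ _ => mul_comm _ _)

theorem epsSq_mk (u v : X → ℤ) : epsSq X (u ⊙ v) = epsHom X u * epsHom X v := rfl

theorem epsHom_symRho (z : Sym2Q (X → ℤ)) : epsHom X (symRho X z) = 2 * epsSq X z := by
  have : (epsHom X).toIntLinearMap ∘ₗ symRho X = 2 • epsSq X :=
    linearMap_ext fun u v => by
      simp only [LinearMap.comp_apply, LinearMap.smul_apply, AddMonoidHom.coe_toIntLinearMap,
        symRho_mk, epsSq_mk, map_add, map_zsmul, smul_eq_mul]
      ring
  exact LinearMap.congr_fun this z

theorem eq_sym2Map_augKer_add_add [DecidableEq X] (x₀ : X) (z : Sym2Q (X → ℤ)) :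
    z = incl₂ (sym2Map (augProj x₀) z) + ((augProj x₀ (symRho X z) : X → ℤ) ⊙ Pi.single x₀ 1) +
      epsSq X z • (Pi.single x₀ 1 ⊙ Pi.single x₀ 1) := by
  have : LinearMap.id = incl₂ ∘ₗ sym2Map (augProj x₀) +
      (mk₂ _).flip (Pi.single x₀ 1) ∘ₗ (augKer X).subtype.toIntLinearMap ∘ₗ augProj x₀ ∘ₗ symRho X +
      LinearMap.toSpanSingleton ℤ _ (Pi.single x₀ 1 ⊙ Pi.single x₀ 1) ∘ₗ epsSq X :=
    linearMap_ext fun u v => by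
      simp only [LinearMap.id_apply, LinearMap.add_apply, LinearMap.comp_apply, sym2Map_mk,
        AddMonoidHom.coe_toIntLinearMap, AddSubgroup.coe_subtype, coe_augProj, symRho_mk,
        epsSq_mk, LinearMap.flip_apply, LinearMap.toSpanSingleton_apply, map_add, map_sub,
        map_zsmul, LinearMap.add_apply, LinearMap.sub_apply, LinearMap.smul_apply]
      rw [mk_comm (Pi.single x₀ 1) v]
      module
  exact LinearMap.congr_fun this z

theorem ker_symRho [DecidableEq X] :
    (symRho X).toAddMonoidHom.ker = (incl₂).toAddMonoidHom.range := by
  ext z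
  constructor
  · intro hz
    change symRho X z = 0 at hz
    rcases isEmpty_or_nonempty X with hX | ⟨⟨x₀⟩⟩
    · exact ⟨0, Subsingleton.elim _ _⟩
    have hsq : epsSq X z = 0 := by
      have := epsHom_symRho z
      rw [hz, map_zero] at this
      omega
    have hdecomp := eq_sym2Map_augKer_add_add x₀ z
    rw [hz, map_zero, hsq, zero_smul, ZeroMemClass.coe_zero, map_zero, LinearMap.zero_apply,
      add_zero, add_zero] at hdecomp
    exact ⟨_, hdecomp.symm⟩
  · rintro ⟨t, rfl⟩
    exact symRho_sym2Map_augKer t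

theorem range_symRho [DecidableEq X] :
    (symRho X).toAddMonoidHom.range = (twoSub ℤ).comap (epsHom X) := by
  ext u
  rw [AddSubgroup.mem_comap, mem_twoSub_iff]
  constructor
  · rintro ⟨z, rfl⟩
    exact ⟨epsSq X z, (epsHom_symRho z).symm⟩
  · rintro ⟨k, hk⟩
    rcases isEmpty_or_nonempty X with hX | ⟨⟨x₀⟩⟩
    · exact ⟨0, Subsingleton.elim _ _⟩
    refine ⟨(u ⊙ Pi.single x₀ 1) - k • (Pi.single x₀ 1 ⊙ Pi.single x₀ 1), ?_⟩
    rw [LinearMap.toAddMonoidHom_coe, map_sub, map_zsmul, symRho_mk, symRho_single_single,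
      epsHom_single, one_smul, ← hk]
    module

theorem sym2Map_augKer_injective [DecidableEq X] :
    Injective (incl₂ : Sym2Q (augKer X) →ₗ[ℤ] _) := by
  rcases isEmpty_or_nonempty X with hX | ⟨⟨x₀⟩⟩
  · exact injective_of_subsingleton _
  · exact sym2Map_injective (r := augProj x₀) (augProj_coe x₀)

end Kernel

namespace P2

variable {X : Type} [DecidableEq X]

instance : DecidableEq (P2 X) := inferInstanceAs (DecidableEq {s : Finset X // s.card = 2})

def pair (x y : X) (h : x ≠ y) : P2 X := ⟨{x, y}, Finset.card_pair h⟩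

theorem mem_and_mem_iff {x y : X} (h : x ≠ y) (s : P2 X) :
    x ∈ s.1 ∧ y ∈ s.1 ↔ s = pair x y h := by
  constructor
  · rintro ⟨hx, hy⟩
    refine Subtype.ext (Finset.eq_of_subset_of_card_le ?_ ?_).symm
    · exact Finset.insert_subset hx (Finset.singleton_subset_iff.2 hy)
    · rw [s.2]
      exact (pair x y h).2.ge
  · rintro rfl
    simp [pair]

noncomputable def fst (s : P2 X) : X := (Finset.card_eq_two.mp s.2).choose

noncomputable def snd (s : P2 X) : X := (Finset.card_eq_two.mp s.2).choose_spec.choose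

theorem fst_ne_snd (s : P2 X) : s.fst ≠ s.snd :=
  (Finset.card_eq_two.mp s.2).choose_spec.choose_spec.1

theorem pair_fst_snd (s : P2 X) : pair s.fst s.snd s.fst_ne_snd = s :=
  Subtype.ext (Finset.card_eq_two.mp s.2).choose_spec.choose_spec.2.symm

theorem fst_mem (s : P2 X) : s.fst ∈ s.1 :=
  ((mem_and_mem_iff s.fst_ne_snd s).2 (pair_fst_snd s).symm).1

theorem snd_mem (s : P2 X) : s.snd ∈ s.1 :=
  ((mem_and_mem_iff s.fst_ne_snd s).2 (pair_fst_snd s).symm).2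

theorem apply_fst_snd_pair {α : Type} {F : X → X → α} (hF : ∀ a b, F a b = F b a) {x y : X}
    (h : x ≠ y) : F (pair x y h).fst (pair x y h).snd = F x y := by
  have h₁ : (pair x y h).fst ∈ ({x, y} : Finset X) := fst_mem (pair x y h)
  have h₂ : (pair x y h).snd ∈ ({x, y} : Finset X) := snd_mem (pair x y h)
  have hne := fst_ne_snd (pair x y h)
  generalize (pair x y h).fst = a at *
  generalize (pair x y h).snd = b at *
  simp only [Finset.mem_insert, Finset.mem_singleton] at h₁ h₂
  rcases h₁ with rfl | rfl <;> rcases h₂ with rfl | rfl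
  exacts [absurd rfl hne, rfl, hF _ _, absurd rfl hne]

theorem sum_val {M : Type} [AddCommMonoid M] (s : P2 X) (F : X → M) :
    ∑ x ∈ s.1, F x = F s.fst + F s.snd := by
  conv_lhs => rw [← pair_fst_snd s]
  exact Finset.sum_pair s.fst_ne_snd

theorem sum_smul_val {G : Type} [Group G] [MulAction G X] {M : Type} [AddCommMonoid M]
    (g : G) (s : P2 X) (F : X → M) : ∑ x ∈ (g • s).1, F x = ∑ x ∈ s.1, F (g • x) := by
  rw [p2_smul_def, Finset.sum_image fun _ _ _ _ h => MulAction.injective g h]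

end P2

section Coordinates

open P2

noncomputable def sym2Diag (X : Type) [Fintype X] : Sym2Q (X → ℤ) →ₗ[ℤ] (X → ℤ) :=
  Sym2Q.lift (LinearMap.mul ℤ (X → ℤ)) fun u v => mul_comm u v

/-- For `s = {x, y}` this is `(u x + u y) (v x + v y) - u x v x - u y v y = u x v y + u y v x`. -/
noncomputable def sym2OffDiag (X : Type) [Fintype X] [DecidableEq X] :
    Sym2Q (X → ℤ) →ₗ[ℤ] (P2 X → ℤ) :=
  Sym2Q.lift
    (LinearMap.mk₂ ℤ
      (fun u v s => (∑ x ∈ s.1, u x) * (∑ x ∈ s.1, v x) - ∑ x ∈ s.1, u x * v x)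
      (fun u u' v => by
        ext s; simp only [Pi.add_apply, add_mul, Finset.sum_add_distrib]; ring)
      (fun c u v => by
        ext s; simp only [Pi.smul_apply, smul_eq_mul, mul_assoc, ← Finset.mul_sum]; ring)
      (fun u v v' => by
        ext s; simp only [Pi.add_apply, mul_add, Finset.sum_add_distrib]; ring)
      (fun c u v => by
        ext s; simp only [Pi.smul_apply, smul_eq_mul, mul_left_comm _ c, ← Finset.mul_sum]; ring))
    fun u v => by ext s; simp only [LinearMap.mk₂_apply, mul_comm]

noncomputable def sym2OfDiag (X : Type) [Fintype X] [DecidableEq X] :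
    (X → ℤ) →ₗ[ℤ] Sym2Q (X → ℤ) :=
  Fintype.linearCombination ℤ fun x => (Pi.single x 1 : X → ℤ) ⊙ Pi.single x 1

noncomputable def sym2OfOffDiag (X : Type) [Fintype X] [DecidableEq X] :
    (P2 X → ℤ) →ₗ[ℤ] Sym2Q (X → ℤ) :=
  Fintype.linearCombination ℤ fun s => (Pi.single s.fst 1 : X → ℤ) ⊙ Pi.single s.snd 1

noncomputable def incidence (X : Type) [Fintype X] [DecidableEq X] : (P2 X → ℤ) →ₗ[ℤ] (X → ℤ) :=
  Fintype.linearCombination ℤ fun s => ∑ x ∈ s.1, (Pi.single x 1 : X → ℤ)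

variable {X : Type} [Fintype X] [DecidableEq X]

theorem sym2Diag_single_single (x y : X) :
    sym2Diag X (Pi.single x 1 ⊙ Pi.single y 1) =
      if x = y then (Pi.single x 1 : X → ℤ) else 0 := by
  ext z
  change (Pi.single x 1 : X → ℤ) z * (Pi.single y 1 : X → ℤ) z = _
  by_cases hxy : x = y <;> by_cases hz : z = x <;> simp_all [Pi.single_apply]

theorem sym2OffDiag_single_self (x : X) : sym2OffDiag X (Pi.single x 1 ⊙ Pi.single x 1) = 0 := by
  ext s
  change (∑ z ∈ s.1, Pi.single x (1 : ℤ) z) * (∑ z ∈ s.1, Pi.single x (1 : ℤ) z) -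
    ∑ z ∈ s.1, Pi.single x (1 : ℤ) z * Pi.single x 1 z = 0
  by_cases hx : x ∈ s.1 <;> simp [Pi.single_apply, hx]

theorem sym2OffDiag_single_of_ne {x y : X} (h : x ≠ y) :
    sym2OffDiag X (Pi.single x 1 ⊙ Pi.single y 1) = Pi.single (pair x y h) 1 := by
  ext s
  change (∑ z ∈ s.1, Pi.single x (1 : ℤ) z) * (∑ z ∈ s.1, Pi.single y (1 : ℤ) z) -
    ∑ z ∈ s.1, Pi.single x (1 : ℤ) z * Pi.single y 1 z = _
  simp only [Pi.single_apply, ← mem_and_mem_iff h s]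
  by_cases hx : x ∈ s.1 <;> by_cases hy : y ∈ s.1 <;> simp [hx, hy, h.symm]

theorem incidence_single (s : P2 X) : incidence X (Pi.single s 1) = ∑ x ∈ s.1, Pi.single x 1 := by
  rw [incidence, Fintype.linearCombination_apply_single, one_smul]

theorem incidence_single_pair {x y : X} (h : x ≠ y) :
    incidence X (Pi.single (pair x y h) 1) = Pi.single x 1 + Pi.single y 1 := by
  rw [incidence_single]
  exact Finset.sum_pair h

theorem sym2OfOffDiag_single (s : P2 X) :
    sym2OfOffDiag X (Pi.single s 1) = (Pi.single s.fst 1 ⊙ Pi.single s.snd 1) := by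
  rw [sym2OfOffDiag, Fintype.linearCombination_apply_single, one_smul]

theorem sym2OfDiag_single (x : X) :
    sym2OfDiag X (Pi.single x 1) = (Pi.single x 1 ⊙ Pi.single x 1) := by
  rw [sym2OfDiag, Fintype.linearCombination_apply_single, one_smul]

theorem sym2OfOffDiag_add_sym2OfDiag (z : Sym2Q (X → ℤ)) :
    sym2OfOffDiag X (sym2OffDiag X z) + sym2OfDiag X (sym2Diag X z) = z := by
  suffices sym2OfOffDiag X ∘ₗ sym2OffDiag X + sym2OfDiag X ∘ₗ sym2Diag X = LinearMap.id from
    LinearMap.congr_fun this z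
  refine linearMap_ext_single fun x y => ?_
  rw [LinearMap.add_apply, LinearMap.comp_apply, LinearMap.comp_apply, sym2Diag_single_single,
    LinearMap.id_apply]
  by_cases h : x = y
  · subst h
    rw [sym2OffDiag_single_self, if_pos rfl, map_zero, zero_add, sym2OfDiag_single]
  · rw [sym2OffDiag_single_of_ne h, if_neg h, map_zero, add_zero, sym2OfOffDiag_single]
    exact apply_fst_snd_pair (F := fun a b => (Pi.single a 1 : X → ℤ) ⊙ Pi.single b 1)
      (fun a b => mk_comm _ _) h

theorem symRho_eq_two_smul_sym2Diag_add (z : Sym2Q (X → ℤ)) :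
    symRho X z = (2 : ℤ) • sym2Diag X z + incidence X (sym2OffDiag X z) := by
  suffices symRho X = (2 : ℤ) • sym2Diag X + incidence X ∘ₗ sym2OffDiag X from
    LinearMap.congr_fun this z
  refine linearMap_ext_single fun x y => ?_
  rw [LinearMap.add_apply, LinearMap.smul_apply, LinearMap.comp_apply, symRho_single_single,
    sym2Diag_single_single]
  by_cases h : x = y
  · subst h
    rw [sym2OffDiag_single_self, if_pos rfl, map_zero, add_zero, two_smul]
  · rw [sym2OffDiag_single_of_ne h, if_neg h, smul_zero, zero_add, incidence_single_pair]

theorem sym2OffDiag_sym2OfOffDiag (f : P2 X → ℤ) : sym2OffDiag X (sym2OfOffDiag X f) = f := by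
  suffices sym2OffDiag X ∘ₗ sym2OfOffDiag X = LinearMap.id from LinearMap.congr_fun this f
  refine (Pi.basisFun ℤ (P2 X)).ext fun s => ?_
  rw [Pi.basisFun_apply, LinearMap.comp_apply, sym2OfOffDiag_single,
    sym2OffDiag_single_of_ne s.fst_ne_snd, pair_fst_snd, LinearMap.id_apply]

theorem sym2OffDiag_sym2OfDiag (c : X → ℤ) : sym2OffDiag X (sym2OfDiag X c) = 0 := by
  suffices sym2OffDiag X ∘ₗ sym2OfDiag X = 0 from LinearMap.congr_fun this c
  refine (Pi.basisFun ℤ X).ext fun x => ?_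
  rw [Pi.basisFun_apply, LinearMap.comp_apply, sym2OfDiag_single, sym2OffDiag_single_self,
    LinearMap.zero_apply]

theorem symRho_sym2OfOffDiag (f : P2 X → ℤ) : symRho X (sym2OfOffDiag X f) = incidence X f := by
  suffices symRho X ∘ₗ sym2OfOffDiag X = incidence X from LinearMap.congr_fun this f
  refine (Pi.basisFun ℤ (P2 X)).ext fun s => ?_
  rw [Pi.basisFun_apply, LinearMap.comp_apply, sym2OfOffDiag_single, symRho_single_single,
    ← incidence_single_pair s.fst_ne_snd, pair_fst_snd]

theorem symRho_sym2OfDiag (c : X → ℤ) : symRho X (sym2OfDiag X c) = (2 : ℤ) • c := by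
  suffices symRho X ∘ₗ sym2OfDiag X = (2 : ℤ) • LinearMap.id from LinearMap.congr_fun this c
  refine (Pi.basisFun ℤ X).ext fun x => ?_
  rw [Pi.basisFun_apply, LinearMap.comp_apply, sym2OfDiag_single, symRho_single_single,
    LinearMap.smul_apply, LinearMap.id_apply, two_smul]

end Coordinates

section ExactSequence

open P2

/-- Each pair is given an arbitrary orientation; only the class modulo `2A` is canonical. -/
noncomputable def signedIncidence (X : Type) [Fintype X] [DecidableEq X] :
    (P2 X → ℤ) →ₗ[ℤ] augKer X :=
  Fintype.linearCombination ℤ fun s => ⟨Pi.single s.fst 1 - Pi.single s.snd 1, by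
    rw [mem_augKer_iff, map_sub, epsHom_single, epsHom_single, sub_self]⟩

/-- The map `W → A/2A` of the exact sequence: by `incidenceModTwo_eq_mk_iff` it is `ρ` followed by
reduction modulo `2U`, under `A/2A ≅ ε⁻¹(2ℤ)/2U`. -/
noncomputable def incidenceModTwo (X : Type) [Fintype X] [DecidableEq X] :
    (P2 X → ℤ) →+ ModTwo (augKer X) :=
  (QuotientAddGroup.mk' _).comp (signedIncidence X).toAddMonoidHom

noncomputable def sym2AugKerToPairs (X : Type) [Fintype X] [DecidableEq X] :
    Sym2Q (augKer X) →ₗ[ℤ] (P2 X → ℤ) :=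
  sym2OffDiag X ∘ₗ incl₂

variable {X : Type} [Fintype X] [DecidableEq X]

theorem incidence_sub_signedIncidence_mem (f : P2 X → ℤ) :
    incidence X f - signedIncidence X f ∈ twoSub (X → ℤ) := by
  refine ⟨∑ s, f s • Pi.single s.snd 1, ?_⟩
  change (2 : ℤ) • (_ : X → ℤ) = _
  simp only [incidence, signedIncidence, Fintype.linearCombination_apply,
    AddSubmonoidClass.coe_finsetSum, AddSubgroup.coe_zsmul, sum_val, Finset.smul_sum,
    ← Finset.sum_sub_distrib]
  refine Finset.sum_congr rfl fun s _ => ?_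
  module

theorem incidenceModTwo_eq_mk_iff (f : P2 X → ℤ) (a : augKer X) :
    incidenceModTwo X f = QuotientAddGroup.mk a ↔ incidence X f - a ∈ twoSub (X → ℤ) := by
  change (QuotientAddGroup.mk (signedIncidence X f) : ModTwo _) = QuotientAddGroup.mk a ↔ _
  rw [QuotientAddGroup.eq_iff_sub_mem, ← coe_mem_twoSub_iff, AddSubgroup.coe_sub,
    ← sub_add_sub_cancel (incidence X f) (signedIncidence X f : X → ℤ) a]
  exact (AddSubgroup.add_mem_cancel_left _ (incidence_sub_signedIncidence_mem f)).symm

theorem incidence_isEquivMapP {G : Type} [Group G] [MulAction G X] :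
    IsEquivMapP G (incidence X) := by
  intro g f
  simp only [incidence, Fintype.linearCombination_apply, Finset.smul_sum]
  rw [← Equiv.sum_comp (MulAction.toPerm g)]
  refine Finset.sum_congr rfl fun s _ => ?_
  rw [MulAction.toPerm_apply, perm_smul_def, inv_smul_smul, sum_smul_val]
  simp only [smul_comm g (f s), smul_single]

theorem sym2OffDiag_isEquivMapP {G : Type} [Group G] [MulAction G X] :
    IsEquivMapP G (sym2OffDiag X) :=
  isEquivMapP_of_mk (φ := (sym2OffDiag X).toAddMonoidHom) fun g u v => by
    ext s
    change (∑ x ∈ s.1, (g • u) x) * (∑ x ∈ s.1, (g • v) x) - ∑ x ∈ s.1, (g • u) x * (g • v) x =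
      (∑ x ∈ (g⁻¹ • s).1, u x) * (∑ x ∈ (g⁻¹ • s).1, v x) - ∑ x ∈ (g⁻¹ • s).1, u x * v x
    simp only [perm_smul_def, sum_smul_val]

theorem sym2AugKerToPairs_isEquivMapP {G : Type} [Group G] [MulAction G X] :
    IsEquivMapP G (sym2AugKerToPairs X) := fun g t => by
  rw [sym2AugKerToPairs, LinearMap.comp_apply, LinearMap.comp_apply,
    sym2Map_isEquivMapP (fun _ _ => rfl), sym2OffDiag_isEquivMapP]

theorem sym2AugKerToPairs_injective : Injective (sym2AugKerToPairs X) := by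
  refine (injective_iff_map_eq_zero _).2 fun t ht => ?_
  have hρ : symRho X (incl₂ t) = 0 := symRho_sym2Map_augKer t
  have hod : sym2OffDiag X (incl₂ t) = 0 := ht
  have hdiag : sym2Diag X (incl₂ t) = 0 := by
    rw [symRho_eq_two_smul_sym2Diag_add, hod, map_zero, add_zero] at hρ
    exact (smul_eq_zero.1 hρ).resolve_left two_ne_zero
  refine sym2Map_augKer_injective ?_
  rw [map_zero, ← sym2OfOffDiag_add_sym2OfDiag (incl₂ t), hod, hdiag, map_zero, map_zero,
    add_zero]

theorem incidenceModTwo_surjective : Surjective (incidenceModTwo X) := by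
  intro m
  obtain ⟨a, rfl⟩ := QuotientAddGroup.mk_surjective m
  have ha : (a : X → ℤ) ∈ (symRho X).toAddMonoidHom.range := by
    rw [range_symRho]
    exact ⟨0, ((mem_augKer_iff _).1 a.2).symm ▸ smul_zero _⟩
  obtain ⟨z, hz⟩ := ha
  refine ⟨sym2OffDiag X z,
    (incidenceModTwo_eq_mk_iff _ _).2 ((mem_twoSub_iff _).2 ⟨-sym2Diag X z, ?_⟩)⟩
  rw [← hz, LinearMap.toAddMonoidHom_coe, symRho_eq_two_smul_sym2Diag_add]
  abel

theorem incidenceModTwo_isEquivMapP {G : Type} [Group G] [MulAction G X] :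
    IsEquivMapP G (incidenceModTwo X) := by
  intro g f
  change incidenceModTwo X (g • f) = QuotientAddGroup.mk (g • signedIncidence X f)
  rw [incidenceModTwo_eq_mk_iff, incidence_isEquivMapP, augKer_smul_def, ← smul_sub]
  obtain ⟨c, hc⟩ := (mem_twoSub_iff _).1 (incidence_sub_signedIncidence_mem f)
  exact (mem_twoSub_iff _).2 ⟨g • c, by rw [smul_comm, hc]⟩

theorem range_sym2AugKerToPairs :
    (sym2AugKerToPairs X).toAddMonoidHom.range = (incidenceModTwo X).ker := by
  ext f
  rw [AddMonoidHom.mem_ker, ← QuotientAddGroup.mk_zero, incidenceModTwo_eq_mk_iff,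
    ZeroMemClass.coe_zero, sub_zero, mem_twoSub_iff]
  constructor
  · rintro ⟨t, rfl⟩
    refine ⟨-sym2Diag X (incl₂ t), ?_⟩
    have hρ := symRho_sym2Map_augKer t
    rw [symRho_eq_two_smul_sym2Diag_add] at hρ
    rw [LinearMap.toAddMonoidHom_coe, sym2AugKerToPairs, LinearMap.comp_apply, smul_neg,
      neg_eq_iff_add_eq_zero]
    exact hρ
  · rintro ⟨c, hc⟩
    have hker : sym2OfOffDiag X f - sym2OfDiag X c ∈ (symRho X).toAddMonoidHom.ker := by
      change symRho X _ = 0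
      rw [map_sub, symRho_sym2OfOffDiag, symRho_sym2OfDiag, ← hc, sub_self]
    rw [ker_symRho] at hker
    obtain ⟨t, ht⟩ := hker
    refine ⟨t, ?_⟩
    change sym2OffDiag X (incl₂ t) = f
    rw [show incl₂ t = _ from ht, map_sub, sym2OffDiag_sym2OfOffDiag, sym2OffDiag_sym2OfDiag,
      sub_zero]

end ExactSequence

open TensorProduct in
theorem stmt_7 (G : Type) [Group G] (X : Type) [MulAction G X] [Fintype X] [DecidableEq X]
    (ρ : Sym2Q (X → ℤ) →+ (X → ℤ))
    (hρ : ∀ x x' : X, ρ ((symSpan (X → ℤ)).mkQ (Pi.single x 1 ⊗ₜ[ℤ] Pi.single x' 1)) =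
        Pi.single x 1 + Pi.single x' 1) :
    IsEquivMapP G ρ ∧
    AddMonoidHom.ker ρ =
      ((sym2Map ((augKer X).subtype.toIntLinearMap)).toAddMonoidHom).range ∧
    ρ.range = AddSubgroup.comap (epsHom X) (twoSub ℤ) ∧
    ∃ (ι : Sym2Q (augKer X) →+ (P2 X → ℤ)) (q : (P2 X → ℤ) →+ ModTwo (augKer X)),
      IsEquivMapP G ι ∧ IsEquivMapP G q ∧ Function.Injective ι ∧
      Function.Surjective q ∧ ι.range = q.ker := by
  obtain rfl := eq_symRho hρ
  exact ⟨symRho_isEquivMapP, ker_symRho, range_symRho, (sym2AugKerToPairs X).toAddMonoidHom,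
    incidenceModTwo X, sym2AugKerToPairs_isEquivMapP, incidenceModTwo_isEquivMapP,
    sym2AugKerToPairs_injective, incidenceModTwo_surjective, range_sym2AugKerToPairs⟩
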